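/- arXiv:2601.16105 — 6 statements merged into one kernel-verified Lean document; each statement's English description precedes it below -/
import Mathlib

section
/- With h_k = (α_1)_k···(α_n)_k / ((β_1)_k···(β_m)_k) the coefficients of the hypergeometric series H(α;β;x), one has val_p(h_k) = Σ_{r=1}^∞ w_r(k), where w_r is the zigzag function defined by w_r(0)=0 and w_r(k+1) = w_r(k) + |{i : k + α_i ≡ 0 mod p^r}| − |{j : k + β_j ≡ 0 mod p^r}|, and the sum over r contains only finitely many nonzero terms for each k. -/
open scoped Classical

section Aux

lemma ascPochhammer_eval_prod (k : ℕ) (x : ℚ) :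
    (ascPochhammer ℚ k).eval x = ∏ t ∈ Finset.range k, (x + t) := by
  induction k with
  | zero => simp
  | succ k ih => rw [ascPochhammer_succ_eval, ih, Finset.prod_range_succ]

lemma padicValRat_prod (p : ℕ) [Fact p.Prime] {ι : Type*} (s : Finset ι) (f : ι → ℚ)
    (hf : ∀ i ∈ s, f i ≠ 0) :
    padicValRat p (∏ i ∈ s, f i) = ∑ i ∈ s, padicValRat p (f i) := by
  induction s using Finset.induction with
  | empty => simp
  | insert _ _ hns ih =>
    rename_i a s
    rw [Finset.prod_insert hns, Finset.sum_insert hns,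
      padicValRat.mul (hf a (Finset.mem_insert_self a s))
        (Finset.prod_ne_zero_iff.2 fun i hi => hf i (Finset.mem_insert_of_mem hi)),
      ih fun i hi => hf i (Finset.mem_insert_of_mem hi)]

lemma count_icc (R : ℕ) (V : ℤ) (h0 : 0 ≤ V) (hR : V ≤ R) :
    ∑ r ∈ Finset.Icc 1 R, (if (r : ℤ) ≤ V then (1 : ℤ) else 0) = V := by
  rw [Finset.sum_boole]
  have key : Finset.filter (fun x : ℕ => (x : ℤ) ≤ V) (Finset.Icc 1 R) = Finset.Icc 1 V.toNat := by
    ext r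
    simp only [Finset.mem_filter, Finset.mem_Icc]
    omega
  rw [key, Nat.card_Icc]
  omega

end Aux

theorem valuation_eq_sum_of_zigzags
    (p : ℕ) (hp : p.Prime) (n m : ℕ) (α : Fin n → ℚ) (β : Fin m → ℚ)
    (hα : ∀ i, 0 ≤ padicValRat p (α i)) (hβ : ∀ j, 0 ≤ padicValRat p (β j))
    (hαZ : ∀ i (l : ℕ), α i ≠ -(l : ℚ)) (hβZ : ∀ j (l : ℕ), β j ≠ -(l : ℚ))
    (w : ℕ → ℕ → ℤ)
    (hw0 : ∀ r, 1 ≤ r → w r 0 = 0)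
    (hwrec : ∀ r, 1 ≤ r → ∀ k : ℕ, w r (k + 1) = w r k
      + (Finset.univ.filter (fun i : Fin n =>
          (k : ℚ) + α i = 0 ∨ (r : ℤ) ≤ padicValRat p ((k : ℚ) + α i))).card
      - (Finset.univ.filter (fun j : Fin m =>
          (k : ℚ) + β j = 0 ∨ (r : ℤ) ≤ padicValRat p ((k : ℚ) + β j))).card)
    (h : ℕ → ℚ)
    (hh : ∀ k, h k = (∏ i, (ascPochhammer ℚ k).eval (α i)) /
      (∏ j, (ascPochhammer ℚ k).eval (β j))) :
    ∀ k : ℕ, {r : ℕ | 1 ≤ r ∧ w r k ≠ 0}.Finite ∧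
      padicValRat p (h k) = ∑ᶠ r ∈ Set.Ici 1, w r k := by
  haveI : Fact p.Prime := ⟨hp⟩
  -- nonvanishing
  have hαne : ∀ (i : Fin n) (t : ℕ), (t : ℚ) + α i ≠ 0 := by
    intro i t hzero
    exact hαZ i t (by linarith)
  have hβne : ∀ (j : Fin m) (t : ℕ), (t : ℚ) + β j ≠ 0 := by
    intro j t hzero
    exact hβZ j t (by linarith)
  -- valuations
  set Vα : Fin n → ℕ → ℤ := fun i t => padicValRat p ((t : ℚ) + α i) with hVα
  set Vβ : Fin m → ℕ → ℤ := fun j t => padicValRat p ((t : ℚ) + β j) with hVβ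
  have hVα0 : ∀ i t, 0 ≤ Vα i t := by
    intro i t
    rcases Nat.eq_zero_or_pos t with rfl | ht
    · simpa [hVα] using hα i
    · refine le_trans (le_min ?_ (hα i)) (padicValRat.min_le_padicValRat_add (hαne i t))
      rw [padicValRat.of_nat]
      exact_mod_cast Nat.zero_le _
  have hVβ0 : ∀ j t, 0 ≤ Vβ j t := by
    intro j t
    rcases Nat.eq_zero_or_pos t with rfl | ht
    · simpa [hVβ] using hβ j
    · refine le_trans (le_min ?_ (hβ j)) (padicValRat.min_le_padicValRat_add (hβne j t))
      rw [padicValRat.of_nat]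
      exact_mod_cast Nat.zero_le _
  -- explicit formula for w
  have hwform : ∀ r, 1 ≤ r → ∀ K : ℕ, w r K =
      ∑ t ∈ Finset.range K,
        ((∑ i, if (r : ℤ) ≤ Vα i t then (1 : ℤ) else 0)
          - ∑ j, if (r : ℤ) ≤ Vβ j t then (1 : ℤ) else 0) := by
    intro r hr K
    induction K with
    | zero => simp [hw0 r hr]
    | succ K ih =>
      rw [hwrec r hr K, ih, Finset.sum_range_succ]
      have e1 : (Finset.univ.filter (fun i : Fin n =>
          (K : ℚ) + α i = 0 ∨ (r : ℤ) ≤ padicValRat p ((K : ℚ) + α i)))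
          = Finset.univ.filter (fun i : Fin n => (r : ℤ) ≤ Vα i K) := by
        apply Finset.filter_congr
        intro i _
        simp [hαne i K, hVα]
      have e2 : (Finset.univ.filter (fun j : Fin m =>
          (K : ℚ) + β j = 0 ∨ (r : ℤ) ≤ padicValRat p ((K : ℚ) + β j)))
          = Finset.univ.filter (fun j : Fin m => (r : ℤ) ≤ Vβ j K) := by
        apply Finset.filter_congr
        intro j _
        simp [hβne j K, hVβ]
      rw [e1, e2, ← Finset.sum_boole, ← Finset.sum_boole]
      ring
  intro k
  -- the bound R
  set R : ℕ := ∑ t ∈ Finset.range k,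
      ((∑ i, (Vα i t).toNat) + ∑ j, (Vβ j t).toNat) with hR
  have hboundα : ∀ t ∈ Finset.range k, ∀ i, Vα i t ≤ R := by
    intro t ht i
    have h1 : (Vα i t).toNat ≤ (∑ i, (Vα i t).toNat) + ∑ j, (Vβ j t).toNat :=
      le_trans (Finset.single_le_sum (f := fun i => (Vα i t).toNat)
        (fun _ _ => Nat.zero_le _) (Finset.mem_univ i)) (Nat.le_add_right _ _)
    have h2 : (∑ i, (Vα i t).toNat) + ∑ j, (Vβ j t).toNat ≤ R :=
      Finset.single_le_sum (f := fun t => (∑ i, (Vα i t).toNat) + ∑ j, (Vβ j t).toNat)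
        (fun _ _ => Nat.zero_le _) ht
    have := hVα0 i t
    omega
  have hboundβ : ∀ t ∈ Finset.range k, ∀ j, Vβ j t ≤ R := by
    intro t ht j
    have h1 : (Vβ j t).toNat ≤ (∑ i, (Vα i t).toNat) + ∑ j, (Vβ j t).toNat :=
      le_trans (Finset.single_le_sum (f := fun j => (Vβ j t).toNat)
        (fun _ _ => Nat.zero_le _) (Finset.mem_univ j)) (Nat.le_add_left _ _)
    have h2 : (∑ i, (Vα i t).toNat) + ∑ j, (Vβ j t).toNat ≤ R :=
      Finset.single_le_sum (f := fun t => (∑ i, (Vα i t).toNat) + ∑ j, (Vβ j t).toNat)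
        (fun _ _ => Nat.zero_le _) ht
    have := hVβ0 j t
    omega
  -- w vanishes beyond R
  have hvanish : ∀ r, 1 ≤ r → R < r → w r k = 0 := by
    intro r hr hRr
    rw [hwform r hr k]
    apply Finset.sum_eq_zero
    intro t ht
    have hA : ∀ i : Fin n, ¬ ((r : ℤ) ≤ Vα i t) := by
      intro i hle
      have := hboundα t ht i
      omega
    have hB : ∀ j : Fin m, ¬ ((r : ℤ) ≤ Vβ j t) := by
      intro j hle
      have := hboundβ t ht j
      omega
    simp [hA, hB]
  constructor
  · apply Set.Finite.subset (Finset.Icc 1 R).finite_toSet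
    rintro r ⟨hr1, hr2⟩
    simp only [Finset.coe_Icc, Set.mem_Icc]
    refine ⟨hr1, ?_⟩
    by_contra hcon
    exact hr2 (hvanish r hr1 (by omega))
  · -- reduce finsum to finite sum
    have hfin : ∑ᶠ r ∈ Set.Ici 1, w r k = ∑ r ∈ Finset.Icc 1 R, w r k := by
      apply finsum_mem_eq_sum_of_inter_support_eq
      ext r
      simp only [Set.mem_inter_iff, Set.mem_Ici, Function.mem_support, Finset.coe_Icc,
        Set.mem_Icc]
      constructor
      · rintro ⟨hr1, hr2⟩
        refine ⟨⟨hr1, ?_⟩, hr2⟩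
        by_contra hcon
        exact hr2 (hvanish r hr1 (by omega))
      · rintro ⟨⟨hr1, _⟩, hr2⟩
        exact ⟨hr1, hr2⟩
    rw [hfin]
    -- compute RHS
    have hRHS : ∑ r ∈ Finset.Icc 1 R, w r k =
        ∑ t ∈ Finset.range k, ((∑ i, Vα i t) - ∑ j, Vβ j t) := by
      have : ∀ r ∈ Finset.Icc 1 R, w r k =
          ∑ t ∈ Finset.range k,
            ((∑ i, if (r : ℤ) ≤ Vα i t then (1 : ℤ) else 0)
              - ∑ j, if (r : ℤ) ≤ Vβ j t then (1 : ℤ) else 0) := by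
        intro r hr
        exact hwform r (Finset.mem_Icc.1 hr).1 k
      rw [Finset.sum_congr rfl this, Finset.sum_comm]
      apply Finset.sum_congr rfl
      intro t ht
      rw [Finset.sum_sub_distrib, Finset.sum_comm, Finset.sum_comm (s := Finset.Icc 1 R)]
      congr 1
      · apply Finset.sum_congr rfl
        intro i _
        exact count_icc R (Vα i t) (hVα0 i t) (hboundα t ht i)
      · apply Finset.sum_congr rfl
        intro j _
        exact count_icc R (Vβ j t) (hVβ0 j t) (hboundβ t ht j)
    rw [hRHS]
    -- compute LHS
    have hpochα : ∀ i : Fin n, (ascPochhammer ℚ k).eval (α i) ≠ 0 := by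
      intro i
      rw [ascPochhammer_eval_prod]
      apply Finset.prod_ne_zero_iff.2
      intro t _
      rw [add_comm]
      exact hαne i t
    have hpochβ : ∀ j : Fin m, (ascPochhammer ℚ k).eval (β j) ≠ 0 := by
      intro j
      rw [ascPochhammer_eval_prod]
      apply Finset.prod_ne_zero_iff.2
      intro t _
      rw [add_comm]
      exact hβne j t
    have hvalα : ∀ i : Fin n, padicValRat p ((ascPochhammer ℚ k).eval (α i)) =
        ∑ t ∈ Finset.range k, Vα i t := by
      intro i
      rw [ascPochhammer_eval_prod,
        padicValRat_prod p _ _ (fun t _ => by rw [add_comm]; exact hαne i t)]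
      apply Finset.sum_congr rfl
      intro t _
      rw [add_comm]
    have hvalβ : ∀ j : Fin m, padicValRat p ((ascPochhammer ℚ k).eval (β j)) =
        ∑ t ∈ Finset.range k, Vβ j t := by
      intro j
      rw [ascPochhammer_eval_prod,
        padicValRat_prod p _ _ (fun t _ => by rw [add_comm]; exact hβne j t)]
      apply Finset.sum_congr rfl
      intro t _
      rw [add_comm]
    rw [hh k, padicValRat.div (Finset.prod_ne_zero_iff.2 fun i _ => hpochα i)
        (Finset.prod_ne_zero_iff.2 fun j _ => hpochβ j),
      padicValRat_prod p _ _ (fun i _ => hpochα i),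
      padicValRat_prod p _ _ (fun j _ => hpochβ j)]
    rw [Finset.sum_congr rfl (fun i _ => hvalα i), Finset.sum_congr rfl (fun j _ => hvalβ j),
      Finset.sum_comm, Finset.sum_comm (t := Finset.range k), ← Finset.sum_sub_distrib]
end

section
/- Let x ∈ ℤ_(p) (a rational number with denominator coprime to p) with p-adic digit expansion x = Σ_{r≥0} x_r p^r, x_r ∈ {0,…,p−1}, and let e be the multiplicative order of p modulo the denominator of x. Then x_{r+e} = x_r for all r > e + max(0, log_p |x|). -/
theorem aux_cong_padic (p : ℕ) (hp : p.Prime) (x : ℚ) (hx : ¬ p ∣ x.den)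
    (dig : ℕ → ℕ)
    (hexp : ∀ R : ℕ, x = ∑ r ∈ Finset.range R, (dig r : ℚ) * (p : ℚ) ^ r ∨
      (R : ℤ) ≤ padicValRat p (x - ∑ r ∈ Finset.range R, (dig r : ℚ) * (p : ℚ) ^ r)) :
    ∀ R : ℕ, (p:ℤ)^R ∣ (x.den : ℤ) * (∑ i ∈ Finset.range R, (dig i : ℤ) * (p:ℤ)^i) - x.num := by
  haveI : Fact p.Prime := ⟨hp⟩
  intro R
  set S : ℤ := ∑ i ∈ Finset.range R, (dig i : ℤ) * (p:ℤ)^i with hS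
  have hd0 : (x.den : ℚ) ≠ 0 := Nat.cast_ne_zero.mpr x.den_nz
  have hxad : (x.num : ℚ) = x * x.den := by field_simp; exact (Rat.mul_den_eq_num x).symm
  have hsum : ((S : ℚ)) = ∑ i ∈ Finset.range R, (dig i : ℚ) * (p:ℚ)^i := by
    push_cast [hS]; rfl
  have hzero : x = (S:ℚ) → (x.den:ℤ) * S - x.num = 0 := by
    intro h
    have hq : ((x.den:ℤ) * S - x.num : ℚ) = 0 := by
      push_cast
      rw [← h, hxad]; ring
    exact_mod_cast hq
  by_cases hy : x = (S:ℚ)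
  · rw [hzero hy]
    exact dvd_zero _
  · rcases hexp R with h | h
    · rw [← hsum] at h
      rw [hzero h]
      exact dvd_zero _
    · rw [← hsum] at h
      have hN : (x.num - (x.den:ℤ) * S) ≠ 0 := by
        intro h0
        apply hy
        have hq : ((x.num - (x.den:ℤ) * S : ℤ) : ℚ) = 0 := by rw [h0]; simp
        push_cast at hq
        rw [hxad] at hq
        have hq2 : x * (x.den:ℚ) = (S:ℚ) * x.den := by linarith
        exact mul_right_cancel₀ hd0 hq2
      have hrepr : x - (S:ℚ) = ((x.num - (x.den:ℤ) * S : ℤ) : ℚ) / ((x.den:ℤ) : ℚ) := by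
        rw [eq_div_iff (by exact_mod_cast hd0)]
        push_cast
        rw [hxad]; ring
      rw [hrepr] at h
      rw [padicValRat.div (by exact_mod_cast hN) (by exact_mod_cast hd0)] at h
      rw [padicValRat.of_int, padicValRat.of_int] at h
      have hden0 : padicValInt p (x.den:ℤ) = 0 := by
        unfold padicValInt
        simp only [Int.natAbs_natCast]
        exact padicValNat.eq_zero_of_not_dvd hx
      rw [hden0] at h
      have h' : R ≤ padicValInt p (x.num - (x.den:ℤ) * S) := by omega
      have hdvd : (p:ℤ)^R ∣ (x.num - (x.den:ℤ) * S) := by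
        rw [padicValInt_dvd_iff]
        exact Or.inr h'
      have := hdvd.neg_right
      simpa [neg_sub] using this

set_option maxHeartbeats 1000000 in
theorem padic_expansion_eventually_periodic
    (p : ℕ) (hp : p.Prime) (x : ℚ) (hx : ¬ p ∣ x.den)
    (dig : ℕ → ℕ) (hdig : ∀ r, dig r < p)
    (hexp : ∀ R : ℕ, x = ∑ r ∈ Finset.range R, (dig r : ℚ) * (p : ℚ) ^ r ∨
      (R : ℤ) ≤ padicValRat p (x - ∑ r ∈ Finset.range R, (dig r : ℚ) * (p : ℚ) ^ r))
    (e : ℕ) (he : e = orderOf (p : ZMod x.den)) :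
    ∀ r : ℕ, (e : ℝ) + max 0 (Real.logb p |(x : ℝ)|) < r → dig (r + e) = dig r := by
  intro r hr
  haveI : Fact p.Prime := ⟨hp⟩
  haveI : NeZero x.den := ⟨x.den_nz⟩
  have hpd : Nat.Coprime p x.den := (Nat.Prime.coprime_iff_not_dvd hp).mpr hx
  have hp2 : (2:ℤ) ≤ (p:ℤ) := by exact_mod_cast hp.two_le
  have he1 : 0 < e := by
    rw [he, ← ZMod.coe_unitOfCoprime p hpd, orderOf_units]
    exact orderOf_pos _
  have hdq : (x.den:ℤ) ∣ (p:ℤ)^e - 1 := by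
    have h1 : ((p : ZMod x.den))^e = 1 := he ▸ pow_orderOf_eq_one _
    have h2 : (((p:ℤ)^e - 1 : ℤ) : ZMod x.den) = 0 := by
      push_cast
      rw [h1]; ring
    exact (ZMod.intCast_zmod_eq_zero_iff_dvd _ _).mp h2
  obtain ⟨c, hc⟩ := hdq
  set q : ℤ := (p:ℤ)^e - 1 with hqdef
  set m : ℤ := x.num * c with hmdef
  have hdm : (x.den:ℤ) * m = q * x.num := by rw [hmdef, hc]; ring
  have hd0 : (x.den : ℚ) ≠ 0 := Nat.cast_ne_zero.mpr x.den_nz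
  have hxad : (x.num : ℚ) = x * x.den := by field_simp; exact (Rat.mul_den_eq_num x).symm
  have hmx : (m : ℚ) = ((p:ℚ)^e - 1) * x := by
    apply mul_left_cancel₀ hd0
    have h2 : ((x.den:ℚ)) * (m:ℚ) = ((p:ℚ)^e - 1) * (x.num:ℚ) := by
      have h3 := hdm
      rw [hqdef] at h3
      exact_mod_cast h3
    rw [h2, hxad]
    ring
  have hppos : (0:ℤ) < (p:ℤ) := by linarith
  have hpe2 : (2:ℤ) ≤ (p:ℤ)^e := by
    calc (2:ℤ) ≤ (p:ℤ) := hp2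
    _ = (p:ℤ)^1 := (pow_one _).symm
    _ ≤ (p:ℤ)^e := pow_le_pow_right₀ (by linarith) he1
  have hq1 : (1:ℤ) ≤ q := by rw [hqdef]; linarith
  set P : ℤ := (p:ℤ)^(r+e) with hPdef
  have hP : (0:ℤ) < P := pow_pos hppos _
  have hPre : (p:ℤ)^e * (p:ℤ)^r = P := by rw [hPdef, ← pow_add, add_comm]
  have hprP : (p:ℤ)^r ≤ P := pow_le_pow_right₀ (by linarith) (by omega)
  set S : ℕ → ℤ := fun R => ∑ i ∈ Finset.range R, (dig i : ℤ) * (p:ℤ)^i with hSdef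
  have hSnn : ∀ R, 0 ≤ S R := by
    intro R
    apply Finset.sum_nonneg
    intro i _
    positivity
  have hSlt : ∀ R, S R < (p:ℤ)^R := by
    intro R
    have h1 : S R ≤ ∑ i ∈ Finset.range R, ((p:ℤ)-1) * (p:ℤ)^i := by
      apply Finset.sum_le_sum
      intro i _
      have hle : (dig i : ℤ) ≤ (p:ℤ) - 1 := by
        have := hdig i
        omega
      have hppow : (0:ℤ) ≤ (p:ℤ)^i := by positivity
      exact mul_le_mul_of_nonneg_right hle hppow
    have h2 : ∑ i ∈ Finset.range R, ((p:ℤ)-1) * (p:ℤ)^i = (p:ℤ)^R - 1 := by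
      calc ∑ i ∈ Finset.range R, ((p:ℤ)-1) * (p:ℤ)^i
          = (∑ i ∈ Finset.range R, (p:ℤ)^i) * ((p:ℤ) - 1) := by
            rw [Finset.sum_mul]
            apply Finset.sum_congr rfl
            intro i _
            ring
      _ = (p:ℤ)^R - 1 := geom_sum_mul (p:ℤ) R
    omega
  have key : ∀ R : ℕ, (p:ℤ)^R ∣ (x.den:ℤ) * S R - x.num :=
    aux_cong_padic p hp x hx dig hexp
  have hcop : IsCoprime ((p:ℤ)) ((x.den:ℤ)) := Nat.isCoprime_iff_coprime.mpr hpd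
  have key2 : ∀ R : ℕ, (p:ℤ)^R ∣ q * S R - m := by
    intro R
    have h1 : (p:ℤ)^R ∣ (x.den:ℤ) * (q * S R - m) := by
      have heq : (x.den:ℤ) * (q * S R - m) = q * ((x.den:ℤ) * S R - x.num) := by
        rw [mul_sub, hdm]; ring
      rw [heq]
      exact Dvd.dvd.mul_left (key R) _
    exact (hcop.pow_left).dvd_of_dvd_mul_left h1
  -- size bound
  have hm : |m| < (p:ℤ)^r := by
    have hp1 : (1:ℝ) < p := by exact_mod_cast hp.one_lt
    have hp0 : (0:ℝ) < p := by positivity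
    have hreal : |(m:ℝ)| < (p:ℝ)^r := by
      have hmR : (m:ℝ) = ((p:ℝ)^e - 1) * (x:ℝ) := by exact_mod_cast hmx
      by_cases hx0 : (x:ℝ) = 0
      · rw [hmR, hx0, mul_zero, abs_zero]
        positivity
      · have habs : 0 < |(x:ℝ)| := abs_pos.mpr hx0
        have hlog : Real.logb p |(x:ℝ)| < (r:ℝ) - e := by
          have := le_max_right (0:ℝ) (Real.logb p |(x:ℝ)|)
          linarith
        have hxlt : |(x:ℝ)| < (p:ℝ) ^ ((r:ℝ) - e) := by
          calc |(x:ℝ)| = (p:ℝ) ^ (Real.logb p |(x:ℝ)|) := (Real.rpow_logb hp0 (ne_of_gt hp1) habs).symm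
          _ < (p:ℝ) ^ ((r:ℝ) - e) := Real.rpow_lt_rpow_of_exponent_lt hp1 hlog
        have hq1' : (1:ℝ) ≤ (p:ℝ)^e := one_le_pow₀ (le_of_lt hp1)
        have keyr : ((p:ℝ)^e - 1) * |(x:ℝ)| < (p:ℝ)^r := by
          calc ((p:ℝ)^e - 1) * |(x:ℝ)| < (p:ℝ)^e * ((p:ℝ) ^ ((r:ℝ) - e)) := by
                nlinarith [hxlt, habs]
          _ = (p:ℝ)^r := by
              rw [← Real.rpow_natCast (p:ℝ) e, ← Real.rpow_add hp0, ← Real.rpow_natCast (p:ℝ) r]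
              ring_nf
        rw [hmR, abs_mul, abs_of_nonneg (by linarith : (0:ℝ) ≤ (p:ℝ)^e - 1)]
        exact keyr
    exact_mod_cast hreal
  have hmlow : -(p:ℤ)^r < m := by
    have := abs_lt.mp hm
    linarith [this.1]
  have hmhigh : m < (p:ℤ)^r := (abs_lt.mp hm).2
  -- main computation
  set A : ℤ := (dig (r+e) : ℤ) with hAdef
  set T : ℤ := S (r+e+1) with hTdef
  set B : ℤ := S (r+e) with hBdef
  have hTB : T = B + A * P := by
    rw [hTdef, hBdef, hAdef, hPdef]
    simp only [hSdef]
    rw [Finset.sum_range_succ]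
  obtain ⟨K, hK⟩ := key2 (r+e+1)
  obtain ⟨K', hK'⟩ := key2 (r+e)
  rw [← hTdef] at hK
  rw [← hBdef, ← hPdef] at hK'
  have hB0 : 0 ≤ B := hSnn _
  have hB1 : B < P := by
    have := hSlt (r+e)
    rw [← hBdef, ← hPdef] at this
    exact this
  -- bounds on K'
  have hK'0 : 0 ≤ K' := by
    by_contra hneg
    push_neg at hneg
    have h1 : K' ≤ -1 := by omega
    have h2 : P * K' ≤ P * (-1) := mul_le_mul_of_nonneg_left h1 (le_of_lt hP)
    have h3 : 0 ≤ q * B := mul_nonneg (by linarith) hB0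
    linarith
  have hK'q : K' ≤ q := by
    by_contra hneg
    push_neg at hneg
    have h1 : q + 1 ≤ K' := by omega
    have h2 : P * (q+1) ≤ P * K' := mul_le_mul_of_nonneg_left h1 (le_of_lt hP)
    have h3 : q * B ≤ q * (P - 1) := mul_le_mul_of_nonneg_left (by linarith) (by linarith)
    nlinarith
  have hqBm : q * (B + m) = (p:ℤ)^e * m + P * K' := by
    rw [hqdef] at hK' ⊢
    linear_combination hK'
  have hpem : |(p:ℤ)^e * m| < P := by
    rw [abs_mul, abs_of_nonneg (by positivity : (0:ℤ) ≤ (p:ℤ)^e)]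
    calc (p:ℤ)^e * |m| < (p:ℤ)^e * (p:ℤ)^r := by
          apply mul_lt_mul_of_pos_left hm
          positivity
    _ = P := hPre
  have hBm0 : 0 ≤ B + m := by
    rcases eq_or_lt_of_le hK'0 with h0 | h1
    · have hm0 : q * B = m := by
        rw [← h0, mul_zero] at hK'
        linarith
      have h3 : 0 ≤ q * B := mul_nonneg (by linarith) hB0
      linarith
    · have h2 : -P < (p:ℤ)^e * m := by
        have := abs_lt.mp hpem
        linarith [this.1]
      have h3 : P * 1 ≤ P * K' := mul_le_mul_of_nonneg_left (by linarith) (le_of_lt hP)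
      have h4 : 0 < q * (B + m) := by
        rw [hqBm]
        linarith
      by_contra hcon
      push_neg at hcon
      have h5 : q * (B + m) < 0 := mul_neg_of_pos_of_neg (by linarith) (by linarith)
      linarith
  have hBmP : B + m < P := by
    rcases eq_or_lt_of_le hK'q with h0 | h1
    · rw [h0] at hK'
      have hmneg : m ≤ -q := by
        nlinarith [mul_le_mul_of_nonneg_left (show B - P ≤ -1 by linarith) (show (0:ℤ) ≤ q by linarith)]
      linarith
    · have h2 : (p:ℤ)^e * m < P := (abs_lt.mp hpem).2
      have h3 : P * K' ≤ P * (q-1) := mul_le_mul_of_nonneg_left (by linarith) (le_of_lt hP)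
      have h4 : q * (B + m) < P * q := by
        rw [hqBm]
        nlinarith
      by_contra hcon
      push_neg at hcon
      have h5 : q * P ≤ q * (B + m) := mul_le_mul_of_nonneg_left hcon (by linarith)
      nlinarith
  -- floor computations
  have hdiv1 : (T + m) / P = A := by
    have h1 : T + m = (B + m) + P * A := by rw [hTB]; ring
    rw [h1, Int.add_mul_ediv_left _ A (ne_of_gt hP), Int.ediv_eq_zero_of_lt hBm0 hBmP, zero_add]
  have hdiv2 : T / (p:ℤ)^r = A + p * K := by
    have hexp1 : (p:ℤ)^(r+e+1) = P * p := by rw [hPdef, pow_succ]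
    rw [hexp1, hqdef] at hK
    have hPe : (p:ℤ)^e * T = (T + m) + P * ((p:ℤ) * K) := by linear_combination hK
    have h4 : T / (p:ℤ)^r = ((p:ℤ)^e * T) / ((p:ℤ)^e * (p:ℤ)^r) :=
      (Int.mul_ediv_mul_of_pos _ _ (by positivity)).symm
    rw [h4, hPre, hPe, Int.add_mul_ediv_left _ ((p:ℤ)*K) (ne_of_gt hP), hdiv1]
  -- digit extraction
  set W : ℤ := ∑ j ∈ Finset.range (e+1), (dig (r+j) : ℤ) * (p:ℤ)^j with hWdef
  have hsplit : T = S r + (p:ℤ)^r * W := by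
    rw [hTdef, hWdef]
    simp only [hSdef]
    show (∑ i ∈ Finset.range (r+(e+1)), (dig i : ℤ) * (p:ℤ)^i) = _
    rw [Finset.sum_range_add, Finset.mul_sum]
    congr 1
    apply Finset.sum_congr rfl
    intro j _
    rw [pow_add]
    ring
  have hTdr : T / (p:ℤ)^r = W := by
    rw [hsplit, Int.add_mul_ediv_left _ W (by positivity : (p:ℤ)^r ≠ 0),
      Int.ediv_eq_zero_of_lt (hSnn r) (hSlt r), zero_add]
  set V : ℤ := ∑ j ∈ Finset.range e, (dig (r+1+j) : ℤ) * (p:ℤ)^j with hVdef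
  have hWV : W = (dig r : ℤ) + (p:ℤ) * V := by
    rw [hWdef, Finset.sum_range_succ']
    have hsum2 : ∑ k ∈ Finset.range e, (dig (r+(k+1)) : ℤ) * (p:ℤ)^(k+1) = (p:ℤ) * V := by
      rw [hVdef, Finset.mul_sum]
      apply Finset.sum_congr rfl
      intro j _
      rw [show r + (j+1) = r+1+j by omega, pow_succ]
      ring
    rw [hsum2]
    simp [add_comm]
  -- conclude
  have heqn : (dig r : ℤ) + (p:ℤ) * V = A + (p:ℤ) * K := by
    rw [← hWV, ← hTdr, hdiv2]
  have hmod : ((dig r : ℤ) + (p:ℤ) * V) % (p:ℤ) = (A + (p:ℤ) * K) % (p:ℤ) := by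
    rw [heqn]
  rw [Int.add_mul_emod_self_left, Int.add_mul_emod_self_left] at hmod
  have hdr : (dig r : ℤ) % (p:ℤ) = (dig r : ℤ) :=
    Int.emod_eq_of_lt (by positivity) (by exact_mod_cast hdig r)
  have hAr : A % (p:ℤ) = A := by
    rw [hAdef]
    exact Int.emod_eq_of_lt (by positivity) (by exact_mod_cast hdig (r+e))
  rw [hdr, hAr] at hmod
  have hfin : (dig (r+e) : ℤ) = (dig r : ℤ) := by rw [← hAdef, ← hmod]
  exact_mod_cast hfin
end

section
/- (Christol's lemma) Let γ = a/d ∈ ℚ in lowest terms, let q > |a − d| be an integer coprime with d, and let Δ be the unique integer in {1,…,d−1} with Δq ≡ 1 (mod d). Then the unique representative in {0,1,…,q−1} of the residue of 1 − γ modulo q (i.e., the unique element of [0,q) congruent to 1−γ in (1/d)ℤ/qℤ) equals (1 − γ) + q·{γΔ}, where {·} denotes the fractional part. -/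
theorem christol_lemma
    (a : ℤ) (d : ℕ) (hd : 0 < d) (hred : a.gcd d = 1)
    (γ : ℚ) (hγ : γ = (a : ℚ) / (d : ℚ))
    (q : ℕ) (hq : |a - (d : ℤ)| < (q : ℤ)) (hqd : Nat.Coprime q d)
    (Δ : ℕ) (hΔ1 : 1 ≤ Δ) (hΔ2 : Δ < d) (hΔ : ((Δ : ℤ) * q) % d = 1 % (d : ℤ)) :
    ∃ z : ℕ, z < q ∧ (z : ℚ) = (1 - γ) + (q : ℚ) * Int.fract (γ * (Δ : ℚ)) ∧
      (z : ℤ) * d ≡ (d : ℤ) - a [ZMOD (q : ℤ)] := by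
  have hdz : (0:ℤ) < d := by exact_mod_cast hd
  have habs := abs_lt.mp hq
  have hq1 : (1:ℤ) ≤ q := by omega
  set r : ℤ := (a * Δ) % d with hr
  have hr0 : 0 ≤ r := Int.emod_nonneg _ hdz.ne'
  have hrlt : r < d := Int.emod_lt_of_pos _ hdz
  have hΔ' : ((Δ:ℤ) * q) ≡ 1 [ZMOD (d:ℤ)] := hΔ
  have hcop : IsCoprime (d:ℤ) a := (Int.isCoprime_iff_gcd_eq_one.mpr hred).symm
  have hr1 : 1 ≤ r := by
    by_contra h
    have hr00 : r = 0 := by omega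
    have hdvd : (d:ℤ) ∣ a * (Δ:ℤ) := Int.dvd_of_emod_eq_zero (by rw [← hr, hr00])
    have hdΔ : (d:ℤ) ∣ (Δ:ℤ) := hcop.dvd_of_dvd_mul_left hdvd
    have : (d:ℕ) ∣ Δ := by exact_mod_cast hdΔ
    have := Nat.le_of_dvd (by omega) this
    omega
  have h1 : r ≡ a * Δ [ZMOD (d:ℤ)] := Int.emod_emod_of_dvd _ dvd_rfl
  have h2 : (q:ℤ) * r ≡ a [ZMOD (d:ℤ)] := by
    calc (q:ℤ) * r ≡ q * (a * Δ) [ZMOD (d:ℤ)] := h1.mul_left _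
    _ = a * ((Δ:ℤ) * q) := by ring
    _ ≡ a * 1 [ZMOD (d:ℤ)] := hΔ'.mul_left a
    _ = a := by ring
  set N : ℤ := (d:ℤ) - a + q * r with hN
  have hdvdN : (d:ℤ) ∣ N := by
    obtain ⟨k, hk⟩ := h2.dvd
    exact ⟨1 - k, by linarith [hk]⟩
  have hN0 : 0 < N := by nlinarith [habs.1, hq1, hr1]
  have hNlt : N < q * d := by nlinarith [habs.2, hrlt, hq1]
  set m : ℤ := N / d with hm
  have hmd : m * d = N := Int.ediv_mul_cancel hdvdN
  have hm0 : 0 ≤ m := Int.ediv_nonneg hN0.le hdz.le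
  have hmq : m < q := by
    rw [hm, Int.ediv_lt_iff_lt_mul hdz]
    exact hNlt
  refine ⟨m.toNat, by omega, ?_, ?_⟩
  · have hfr : Int.fract (γ * (Δ:ℚ)) = (r : ℚ) / d := by
      rw [hγ]
      have : (a:ℚ) / d * (Δ:ℚ) = ((a * (Δ:ℤ) : ℤ) : ℚ) / (d:ℚ) := by
        push_cast; ring
      rw [this, Int.fract_div_intCast_eq_div_intCast_mod]
    have hcast : ((m.toNat : ℕ) : ℚ) = (m : ℚ) := by
      norm_cast; omega
    have hmQ : (m:ℚ) * d = (N:ℚ) := by exact_mod_cast hmd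
    rw [hfr, hγ, hcast]
    have hdQ : (d:ℚ) ≠ 0 := by positivity
    field_simp
    push_cast [hN] at hmQ ⊢
    linarith [hmQ]
  · have hcast : ((m.toNat : ℕ) : ℤ) = m := by omega
    rw [hcast, hmd]
    exact Int.ModEq.symm (Int.modEq_iff_dvd.mpr ⟨r, by ring⟩)
end

section
/- For γ ∈ ℤ_(p), the Pochhammer product (γ)_p = γ(γ+1)···(γ+p−1) is multiplicatively congruent to −p·D_p(γ) modulo p; that is, either both sides are 0, or their quotient lies in 1 + pℤ_(p). -/
/-- Two rationals are multiplicatively congruent modulo `p` if both are zero,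
or the second is nonzero and their quotient lies in `1 + pℤ_(p)`. -/
def MulCongMod (p : ℕ) (a b : ℚ) : Prop :=
  (a = 0 ∧ b = 0) ∨ (b ≠ 0 ∧ ∃ u : ℚ, ¬ p ∣ u.den ∧ a / b = 1 + p * u)

namespace DworkAux

open Finset

/-- `q` lies in `ℤ_(p)`: it can be written with denominator prime to `p`. -/
def PLoc (p : ℕ) (q : ℚ) : Prop := ∃ n d : ℤ, ¬ (p : ℤ) ∣ d ∧ q * d = n

/-- Congruence mod `p ℤ_(p)`. -/
def Cong (p : ℕ) (x y : ℚ) : Prop :=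
  ∃ n d : ℤ, ¬ (p : ℤ) ∣ d ∧ (x - y) * d = p * n

lemma ploc_of_den {p : ℕ} {q : ℚ} (h : ¬ p ∣ q.den) : PLoc p q :=
  ⟨q.num, q.den, fun hd => h (Int.ofNat_dvd.mp hd), by exact_mod_cast Rat.mul_den_eq_num q⟩

lemma den_of_ploc {p : ℕ} {q : ℚ} (h : PLoc p q) : ¬ p ∣ q.den := by
  obtain ⟨n, d, hd, hqd⟩ := h
  intro hpden
  apply hd
  have h3 : q * (q.den : ℚ) = q.num := by exact_mod_cast Rat.mul_den_eq_num q
  have h2 : (q.num : ℚ) * d = n * q.den := by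
    calc (q.num : ℚ) * d = (q * q.den) * d := by rw [h3]
      _ = (q * d) * q.den := by ring
      _ = n * q.den := by rw [hqd]
  have h2' : q.num * d = n * (q.den : ℤ) := by exact_mod_cast h2
  have hden_dvd : (q.den : ℤ) ∣ q.num * d := ⟨n, by linarith⟩
  have hco : (q.den : ℕ).Coprime q.num.natAbs := q.reduced.symm
  have hdvd : (q.den : ℕ) ∣ q.num.natAbs * d.natAbs := by
    rw [← Int.natAbs_mul]
    exact Int.ofNat_dvd_right.mp (Int.dvd_natAbs.mpr hden_dvd)
  have : (q.den : ℕ) ∣ d.natAbs := (Nat.Coprime.dvd_of_dvd_mul_left hco hdvd)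
  have : ((q.den : ℕ) : ℤ) ∣ d := Int.natCast_dvd_natCast.mpr this |>.trans
    (Int.natAbs_dvd.mpr dvd_rfl)
  exact dvd_trans (Int.natCast_dvd_natCast.mpr hpden) this

lemma ploc_int {p : ℕ} (hp : p.Prime) (m : ℤ) : PLoc p (m : ℚ) :=
  ⟨m, 1, fun h => by
    have h1 : (p : ℤ) = 1 ∨ (p : ℤ) = -1 := Int.isUnit_iff.mp (isUnit_of_dvd_one h)
    have := hp.two_le
    omega, by simp⟩

lemma ploc_mul {p : ℕ} (hp : p.Prime) {x y : ℚ} (hx : PLoc p x) (hy : PLoc p y) :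
    PLoc p (x * y) := by
  obtain ⟨n1, d1, hd1, h1⟩ := hx
  obtain ⟨n2, d2, hd2, h2⟩ := hy
  refine ⟨n1 * n2, d1 * d2, ?_, ?_⟩
  · intro h
    rcases (Nat.prime_iff_prime_int.mp hp).dvd_mul.mp h with h | h
    exacts [hd1 h, hd2 h]
  · push_cast
    calc x * y * (d1 * d2) = (x * d1) * (y * d2) := by ring
      _ = (n1 : ℚ) * n2 := by rw [h1, h2]

lemma ploc_add {p : ℕ} (hp : p.Prime) {x y : ℚ} (hx : PLoc p x) (hy : PLoc p y) :
    PLoc p (x + y) := by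
  obtain ⟨n1, d1, hd1, h1⟩ := hx
  obtain ⟨n2, d2, hd2, h2⟩ := hy
  refine ⟨n1 * d2 + n2 * d1, d1 * d2, ?_, ?_⟩
  · intro h
    rcases (Nat.prime_iff_prime_int.mp hp).dvd_mul.mp h with h | h
    exacts [hd1 h, hd2 h]
  · push_cast
    linear_combination d2 * h1 + d1 * h2

lemma cong_trans {p : ℕ} (hp : p.Prime) {x y z : ℚ} (h1 : Cong p x y) (h2 : Cong p y z) :
    Cong p x z := by
  obtain ⟨n1, d1, hd1, e1⟩ := h1
  obtain ⟨n2, d2, hd2, e2⟩ := h2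
  refine ⟨n1 * d2 + n2 * d1, d1 * d2, ?_, ?_⟩
  · intro h
    rcases (Nat.prime_iff_prime_int.mp hp).dvd_mul.mp h with h | h
    exacts [hd1 h, hd2 h]
  · push_cast
    linear_combination d2 * e1 + d1 * e2

lemma cong_mul {p : ℕ} (hp : p.Prime) {x y z w : ℚ} (h1 : Cong p x y) (h2 : Cong p z w)
    (hz : PLoc p z) (hy : PLoc p y) : Cong p (x * z) (y * w) := by
  obtain ⟨n1, d1, hd1, e1⟩ := h1
  obtain ⟨n2, d2, hd2, e2⟩ := h2
  obtain ⟨nz, dz, hdz, ez⟩ := hz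
  obtain ⟨ny, dy, hdy, ey⟩ := hy
  refine ⟨n1 * nz * d2 * dy + ny * n2 * d1 * dz, d1 * d2 * dz * dy, ?_, ?_⟩
  · intro h
    have hpI := Nat.prime_iff_prime_int.mp hp
    rcases hpI.dvd_mul.mp h with h | h
    · rcases hpI.dvd_mul.mp h with h | h
      · rcases hpI.dvd_mul.mp h with h | h
        exacts [hd1 h, hd2 h]
      · exact hdz h
    · exact hdy h
  · push_cast
    linear_combination (z * dz * d2 * dy) * e1 + ((p : ℚ) * n1 * d2 * dy) * ez +
      (y * dy * d1 * dz) * e2 + ((p : ℚ) * n2 * d1 * dz) * ey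

lemma cong_prod {p : ℕ} (hp : p.Prime) (s : Finset ℕ) (f g : ℕ → ℚ)
    (hf : ∀ i ∈ s, PLoc p (f i)) (hg : ∀ i ∈ s, PLoc p (g i))
    (hc : ∀ i ∈ s, Cong p (f i) (g i)) :
    PLoc p (∏ i ∈ s, f i) ∧ PLoc p (∏ i ∈ s, g i) ∧
      Cong p (∏ i ∈ s, f i) (∏ i ∈ s, g i) := by
  classical
  induction s using Finset.induction_on with
  | empty =>
    refine ⟨⟨1, 1, ?_, by simp⟩, ⟨1, 1, ?_, by simp⟩, ⟨0, 1, ?_, by simp⟩⟩ <;>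
    · intro h
      have : (p : ℤ) = 1 ∨ (p : ℤ) = -1 := Int.isUnit_iff.mp (isUnit_of_dvd_one h)
      have := hp.two_le
      omega
  | insert _ _ hx ih =>
    rename_i i s
    obtain ⟨ihf, ihg, ihc⟩ := ih (fun j hj => hf j (mem_insert_of_mem hj))
      (fun j hj => hg j (mem_insert_of_mem hj)) (fun j hj => hc j (mem_insert_of_mem hj))
    rw [Finset.prod_insert hx, Finset.prod_insert hx]
    refine ⟨ploc_mul hp (hf i (mem_insert_self i s)) ihf,
      ploc_mul hp (hg i (mem_insert_self i s)) ihg, ?_⟩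
    exact cong_mul hp (hc i (mem_insert_self i s)) ihc ihf (hg i (mem_insert_self i s))

lemma asc_eval (n : ℕ) (x : ℚ) :
    (ascPochhammer ℚ n).eval x = ∏ i ∈ range n, (x + i) := by
  induction n with
  | zero => simp [ascPochhammer_zero]
  | succ n ih => rw [ascPochhammer_succ_eval, prod_range_succ, ih]

lemma wilson_shift {p : ℕ} (hp : p.Prime) {a : ℕ} (ha : a < p) :
    ∏ i ∈ (range p).erase a, ((i : ZMod p) - (a : ZMod p)) = -1 := by
  haveI : Fact p.Prime := ⟨hp⟩
  rw [← ZMod.prod_Ico_one_prime]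
  refine Finset.prod_nbij' (fun i => if a < i then i - a else i + p - a)
    (fun j => if j + a < p then j + a else j + a - p) ?_ ?_ ?_ ?_ ?_
  · intro i hi
    simp only [mem_erase, mem_range] at hi
    simp only [mem_Ico]
    split_ifs <;> omega
  · intro j hj
    simp only [mem_Ico] at hj
    simp only [mem_erase, mem_range]
    split_ifs <;> omega
  · intro i hi
    simp only [mem_erase, mem_range] at hi
    split_ifs <;> omega
  · intro j hj
    simp only [mem_Ico] at hj
    split_ifs <;> omega
  · intro i hi
    simp only [mem_erase, mem_range] at hi
    split_ifs with h
    · have : a ≤ i := le_of_lt h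
      push_cast [Nat.cast_sub this]
      ring
    · have : a ≤ i + p := by omega
      push_cast [Nat.cast_sub this]
      simp [ZMod.natCast_self]

end DworkAux

open DworkAux Finset in
theorem pochhammer_p_mulcong_dwork
    (p : ℕ) (hp : p.Prime) (γ δ : ℚ) (hγ : ¬ p ∣ γ.den)
    (hδden : ¬ p ∣ δ.den) (hδ : ∃ a : ℕ, a < p ∧ (p : ℚ) * δ - γ = (a : ℚ)) :
    MulCongMod p ((ascPochhammer ℚ p).eval γ) (-(p : ℚ) * δ) := by
  obtain ⟨a, hap, ha⟩ := hδ
  have hpa : γ + a = (p : ℚ) * δ := by linarith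
  have hmem : a ∈ range p := mem_range.mpr hap
  have heval : (ascPochhammer ℚ p).eval γ = (γ + a) * ∏ i ∈ (range p).erase a, (γ + i) := by
    rw [asc_eval, ← Finset.mul_prod_erase _ _ hmem]
  by_cases hδ0 : δ = 0
  · left
    constructor
    · rw [heval, hpa, hδ0]; ring
    · rw [hδ0]; ring
  · right
    have hp0 : (p : ℚ) ≠ 0 := Nat.cast_ne_zero.mpr hp.pos.ne'
    refine ⟨by simp [hp0, hδ0], ?_⟩
    set P : ℚ := ∏ i ∈ (range p).erase a, (γ + i) with hP
    -- the products congruence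
    have hcp := cong_prod hp ((range p).erase a) (fun i => γ + i)
      (fun i => (((i : ℤ) - (a : ℤ) : ℤ) : ℚ))
      (fun i _ => ploc_add hp (ploc_of_den hγ) (by exact_mod_cast ploc_int hp (i : ℤ)))
      (fun i _ => ploc_int hp _)
      (by
        intro i _
        obtain ⟨nδ, dδ, hdδ, eδ⟩ := ploc_of_den (p := p) (q := δ) hδden
        refine ⟨nδ, dδ, hdδ, ?_⟩
        have : (γ + i) - (((i : ℤ) - (a : ℤ) : ℤ) : ℚ) = (p : ℚ) * δ := by
          push_cast; linarith
        rw [this]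
        linear_combination (p : ℚ) * eδ)
    obtain ⟨hPloc, -, hcong⟩ := hcp
    -- the integer product
    set M : ℤ := ∏ i ∈ (range p).erase a, ((i : ℤ) - (a : ℤ)) with hM
    have hMg : ∏ i ∈ (range p).erase a, (((i : ℤ) - (a : ℤ) : ℤ) : ℚ) = (M : ℚ) := by
      rw [hM]; push_cast; ring
    -- M ≡ -1 mod p via Wilson
    have hMdvd : (p : ℤ) ∣ M + 1 := by
      haveI : Fact p.Prime := ⟨hp⟩
      rw [← ZMod.intCast_zmod_eq_zero_iff_dvd]
      push_cast
      have : (M : ZMod p) = ∏ i ∈ (range p).erase a, ((i : ZMod p) - (a : ZMod p)) := by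
        rw [hM]; push_cast; ring
      rw [this, wilson_shift hp hap]
      ring
    -- Cong P (-1)
    have hcong2 : Cong p ((M : ℚ)) (-1) := by
      obtain ⟨k, hk⟩ := hMdvd
      refine ⟨k, 1, ?_, ?_⟩
      · intro h
        have : (p : ℤ) = 1 ∨ (p : ℤ) = -1 := Int.isUnit_iff.mp (isUnit_of_dvd_one h)
        have := hp.two_le
        omega
      · have : ((M : ℚ) - (-1)) = ((M + 1 : ℤ) : ℚ) := by push_cast; ring
        rw [this, hk]; push_cast; ring
    have hcongP : Cong p P (-1) := by
      refine cong_trans hp ?_ hcong2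
      rw [hP, ← hMg]
      exact hcong
    obtain ⟨n, d, hd, he⟩ := hcongP
    have hd0 : (d : ℚ) ≠ 0 := by
      intro h
      apply hd
      have hd' : d = 0 := by exact_mod_cast h
      simp [hd']
    refine ⟨(-(n : ℚ)) / d, ?_, ?_⟩
    · exact den_of_ploc ⟨-n, d, hd, by push_cast; field_simp⟩
    · have hQ : (ascPochhammer ℚ p).eval γ / (-(p : ℚ) * δ) = -P := by
        rw [heval, hpa]
        field_simp
      rw [hQ]
      have : (P - (-1)) * d = (p : ℚ) * n := he
      field_simp
      linarith [this]
end

section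
/- For γ ∈ ℤ_(p) and k ≥ 0, the rising factorial (γ)_{pk} is multiplicatively congruent to (−p)^k · (D_p(γ))_k modulo p. -/
section Aux

variable {p : ℕ}

lemma pden_of_den_one (hp : p.Prime) {a : ℚ} (h : a.den = 1) : ¬ p ∣ a.den := by
  rw [h]
  exact fun hd => hp.ne_one (Nat.dvd_one.mp hd)

lemma pden_add (hp : p.Prime) {a b : ℚ} (ha : ¬ p ∣ a.den) (hb : ¬ p ∣ b.den) :
    ¬ p ∣ (a + b).den := fun h => by
  rcases (Nat.Prime.dvd_mul hp).mp (h.trans (Rat.add_den_dvd a b)) with h' | h'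
  · exact ha h'
  · exact hb h'

lemma pden_mul (hp : p.Prime) {a b : ℚ} (ha : ¬ p ∣ a.den) (hb : ¬ p ∣ b.den) :
    ¬ p ∣ (a * b).den := fun h => by
  rcases (Nat.Prime.dvd_mul hp).mp (h.trans (Rat.mul_den_dvd a b)) with h' | h'
  · exact ha h'
  · exact hb h'

lemma pden_intCast (hp : p.Prime) (n : ℤ) : ¬ p ∣ ((n : ℚ)).den :=
  pden_of_den_one hp (Rat.den_intCast n)

lemma pden_natCast (hp : p.Prime) (n : ℕ) : ¬ p ∣ ((n : ℚ)).den :=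
  pden_of_den_one hp (Rat.den_natCast n)

lemma pden_inv_int (hp : p.Prime) {c : ℤ} (hc : ¬ (p : ℤ) ∣ c) : ¬ p ∣ (((c : ℚ))⁻¹).den := by
  intro h
  apply hc
  have h1 : ((c : ℚ))⁻¹ = Rat.divInt 1 c := by
    rw [Rat.divInt_eq_div]; push_cast; rw [one_div]
  have h2 : ((Rat.divInt 1 c).den : ℤ) ∣ c := Rat.den_dvd 1 c
  rw [h1] at h
  exact dvd_trans (Int.natCast_dvd_natCast.mpr h) h2

lemma pden_div_int (hp : p.Prime) {x : ℚ} (hx : ¬ p ∣ x.den) {c : ℤ} (hc : ¬ (p : ℤ) ∣ c) :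
    ¬ p ∣ (x / (c : ℚ)).den := by
  rw [div_eq_mul_inv]
  exact pden_mul hp hx (pden_inv_int hp hc)

lemma one_add_mul_one_add (hp : p.Prime) {u v : ℚ} (hu : ¬ p ∣ u.den) (hv : ¬ p ∣ v.den) :
    ∃ w : ℚ, ¬ p ∣ w.den ∧ (1 + p * u) * (1 + p * v) = 1 + p * w :=
  ⟨u + v + p * (u * v),
    pden_add hp (pden_add hp hu hv) (pden_mul hp (pden_natCast hp p) (pden_mul hp hu hv)),
    by ring⟩

lemma prod_one_add (hp : p.Prime) (s : Finset ℕ) (v : ℕ → ℚ)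
    (hv : ∀ j ∈ s, ¬ p ∣ (v j).den) :
    ∃ u : ℚ, ¬ p ∣ u.den ∧ ∏ j ∈ s, (1 + (p : ℚ) * v j) = 1 + p * u := by
  classical
  induction s using Finset.cons_induction with
  | empty => exact ⟨0, pden_of_den_one hp (by norm_num), by simp⟩
  | cons a s has ih =>
    obtain ⟨u, hu, hueq⟩ := ih (fun j hj => hv j (Finset.mem_cons_of_mem hj))
    obtain ⟨w, hw, hweq⟩ :=
      one_add_mul_one_add hp (hv a (Finset.mem_cons_self a s)) hu
    exact ⟨w, hw, by rw [Finset.prod_cons, hueq, hweq]⟩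

lemma mulcong_mul (hp : p.Prime) {a b c d : ℚ}
    (h1 : MulCongMod p a b) (h2 : MulCongMod p c d) : MulCongMod p (a * c) (b * d) := by
  rcases h1 with ⟨ha, hb⟩ | ⟨hb, u, hu, habu⟩
  · exact Or.inl ⟨by rw [ha, zero_mul], by rw [hb, zero_mul]⟩
  · rcases h2 with ⟨hc, hd⟩ | ⟨hd, v, hv, hcdv⟩
    · exact Or.inl ⟨by rw [hc, mul_zero], by rw [hd, mul_zero]⟩
    · obtain ⟨w, hw, hweq⟩ := one_add_mul_one_add hp hu hv
      exact Or.inr ⟨mul_ne_zero hb hd, w, hw,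
        by rw [← div_mul_div_comm, habu, hcdv, hweq]⟩

lemma prod_erase_zmod (hp : p.Prime) {a : ℕ} (ha : a < p) :
    ∏ j ∈ (Finset.range p).erase a, ((j : ZMod p) - (a : ZMod p)) = -1 := by
  haveI : Fact p.Prime := ⟨hp⟩
  haveI : NeZero p := ⟨hp.ne_zero⟩
  have step1 : ∏ j ∈ (Finset.range p).erase a, ((j : ZMod p) - (a : ZMod p))
      = ∏ w ∈ (Finset.univ : Finset (ZMod p)).erase 0, w := by
    refine Finset.prod_nbij' (fun j => (j : ZMod p) - a) (fun w => (w + a).val)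
      ?_ ?_ ?_ ?_ ?_
    · intro j hj
      rw [Finset.mem_erase] at hj ⊢
      refine ⟨?_, Finset.mem_univ _⟩
      intro h0
      have heq : (j : ZMod p) = (a : ZMod p) := by linear_combination h0
      apply hj.1
      have hjlt : j < p := Finset.mem_range.mp hj.2
      calc j = (j : ZMod p).val := (ZMod.val_cast_of_lt hjlt).symm
        _ = (a : ZMod p).val := by rw [heq]
        _ = a := ZMod.val_cast_of_lt ha
    · intro w hw
      rw [Finset.mem_erase] at hw
      rw [Finset.mem_erase, Finset.mem_range]
      refine ⟨?_, ZMod.val_lt _⟩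
      show (w + (a : ZMod p)).val ≠ a
      intro h
      apply hw.1
      have hcast : (((w + a).val : ℕ) : ZMod p) = w + a := ZMod.natCast_rightInverse _
      rw [h] at hcast
      linear_combination -hcast
    · intro j hj
      rw [Finset.mem_erase] at hj
      have hjlt : j < p := Finset.mem_range.mp hj.2
      show ((j : ZMod p) - a + a).val = j
      have heq : (j : ZMod p) - a + a = (j : ZMod p) := by ring
      rw [heq, ZMod.val_cast_of_lt hjlt]
    · intro w _
      show (((w + (a : ZMod p)).val : ℕ) : ZMod p) - a = w
      have hcast : (((w + a).val : ℕ) : ZMod p) = w + a := ZMod.natCast_rightInverse _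
      rw [hcast]; ring
    · intro j _; rfl
  have step2 : ∏ x ∈ Finset.Ico 1 p, ((x : ZMod p))
      = ∏ w ∈ (Finset.univ : Finset (ZMod p)).erase 0, w := by
    refine Finset.prod_nbij' (fun x => (x : ZMod p)) (fun w => w.val)
      ?_ ?_ ?_ ?_ ?_
    · intro x hx
      rw [Finset.mem_Ico] at hx
      rw [Finset.mem_erase]
      refine ⟨?_, Finset.mem_univ _⟩
      show (x : ZMod p) ≠ 0
      intro h0
      have hv := ZMod.val_cast_of_lt hx.2
      rw [h0, ZMod.val_zero] at hv
      omega
    · intro w hw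
      rw [Finset.mem_erase] at hw
      rw [Finset.mem_Ico]
      refine ⟨?_, ZMod.val_lt _⟩
      have hv : w.val ≠ 0 := by
        intro h
        apply hw.1
        have hcast : ((w.val : ℕ) : ZMod p) = w := ZMod.natCast_rightInverse w
        rw [h] at hcast
        simpa using hcast.symm
      show 1 ≤ w.val
      omega
    · intro x hx
      exact ZMod.val_cast_of_lt (Finset.mem_Ico.mp hx).2
    · intro w _
      exact ZMod.natCast_rightInverse w
    · intro x _; rfl
  rw [step1, ← step2, ZMod.prod_Ico_one_prime]

lemma wilson_int (hp : p.Prime) {a : ℕ} (ha : a < p) :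
    ∃ m : ℤ, -(∏ j ∈ (Finset.range p).erase a, ((j : ℤ) - (a : ℤ))) = 1 + (p : ℤ) * m := by
  haveI : Fact p.Prime := ⟨hp⟩
  have h := prod_erase_zmod hp ha
  have h2 : (((-(∏ j ∈ (Finset.range p).erase a, ((j : ℤ) - (a : ℤ))) - 1 : ℤ)) : ZMod p) = 0 := by
    push_cast
    rw [h]
    ring
  obtain ⟨m, hm⟩ := (ZMod.intCast_zmod_eq_zero_iff_dvd _ p).mp h2
  exact ⟨m, by linarith [hm]⟩

lemma dwork_step (hp : p.Prime) {x : ℚ} (hx : ¬ p ∣ x.den) {a : ℕ} (ha : a < p) :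
    MulCongMod p (∏ j ∈ Finset.range p, ((p : ℚ) * x - a + j)) (-(p : ℚ) * x) := by
  classical
  have hpQ : (p : ℚ) ≠ 0 := Nat.cast_ne_zero.mpr hp.ne_zero
  by_cases hx0 : x = 0
  · left
    constructor
    · apply Finset.prod_eq_zero (Finset.mem_range.mpr ha)
      rw [hx0]; ring
    · rw [hx0]; ring
  · right
    have hne : -(p : ℚ) * x ≠ 0 := mul_ne_zero (neg_ne_zero.mpr hpQ) hx0
    refine ⟨hne, ?_⟩
    set s := (Finset.range p).erase a with hs
    have hc : ∀ j ∈ s, ¬ ((p : ℤ) ∣ ((j : ℤ) - a)) := by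
      intro j hj
      rw [hs, Finset.mem_erase] at hj
      have hjlt : j < p := Finset.mem_range.mp hj.2
      intro hd
      have : (j : ℤ) - a = 0 := by
        rcases hd with ⟨t, ht⟩
        have habs : |(j : ℤ) - a| < p := by
          rw [abs_lt]; constructor <;> [omega; omega]
        rw [ht] at habs ⊢
        have : t = 0 := by
          by_contra h0
          have : (1 : ℤ) ≤ |t| := Int.one_le_abs (by omega)
          rw [abs_mul] at habs
          have hpabs : |(p : ℤ)| = p := abs_of_nonneg (by positivity)
          nlinarith [abs_nonneg t]
        rw [this, mul_zero]
      omega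
    have hsplit : ∏ j ∈ Finset.range p, ((p : ℚ) * x - a + j)
        = (p : ℚ) * x * ∏ j ∈ s, ((p : ℚ) * x - a + j) := by
      rw [hs, ← Finset.mul_prod_erase _ _ (Finset.mem_range.mpr ha)]
      congr 1
      push_cast
      ring
    have hfac : ∀ j ∈ s, ((p : ℚ) * x - a + j)
        = (((j : ℤ) - a : ℤ) : ℚ) * (1 + (p : ℚ) * (x / (((j : ℤ) - a : ℤ) : ℚ))) := by
      intro j hj
      have hcz : ((j : ℤ) - a : ℤ) ≠ 0 := by
        intro h
        exact hc j hj (by rw [h]; exact dvd_zero _)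
      have hcj : ((((j : ℤ) - a : ℤ)) : ℚ) ≠ 0 := Int.cast_ne_zero.mpr hcz
      have hcq : (j : ℚ) - (a : ℚ) ≠ 0 := by push_cast at hcj; exact hcj
      push_cast
      field_simp
      ring
    have hprod : ∏ j ∈ s, ((p : ℚ) * x - a + j)
        = ((∏ j ∈ s, ((j : ℤ) - a : ℤ) : ℤ) : ℚ)
          * ∏ j ∈ s, (1 + (p : ℚ) * (x / (((j : ℤ) - a : ℤ) : ℚ))) := by
      rw [Finset.prod_congr rfl hfac, Finset.prod_mul_distrib]
      push_cast
      ring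
    obtain ⟨m, hm⟩ := wilson_int hp ha
    obtain ⟨u, hu, hueq⟩ := prod_one_add hp s (fun j => x / (((j : ℤ) - a : ℤ) : ℚ))
      (fun j hj => pden_div_int hp hx (hc j hj))
    set Q : ℤ := ∏ j ∈ s, ((j : ℤ) - a : ℤ) with hQ
    have hquot : (∏ j ∈ Finset.range p, ((p : ℚ) * x - a + j)) / (-(p : ℚ) * x)
        = ((-Q : ℤ) : ℚ) * ∏ j ∈ s, (1 + (p : ℚ) * (x / (((j : ℤ) - a : ℤ) : ℚ))) := by
      rw [hsplit, hprod]
      rw [div_eq_iff hne]; push_cast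
      ring
    have hmZ : -Q = 1 + (p : ℤ) * m := hm
    have hmQ : ((-Q : ℤ) : ℚ) = 1 + (p : ℚ) * (m : ℚ) := by
      have := congrArg (fun z : ℤ => (z : ℚ)) hmZ
      push_cast at this
      push_cast
      linarith [this]
    obtain ⟨w, hw, hweq⟩ := one_add_mul_one_add hp (pden_intCast hp m) hu
    exact ⟨w, hw, by rw [hquot, hueq, hmQ, hweq]⟩

lemma asc_eval_prod (n : ℕ) (x : ℚ) :
    (ascPochhammer ℚ n).eval x = ∏ j ∈ Finset.range n, (x + j) := by
  induction n with
  | zero => simp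
  | succ n ih => rw [ascPochhammer_succ_eval, Finset.prod_range_succ, ih]

end Aux

theorem pochhammer_pk_mulcong_dwork
    (p : ℕ) (hp : p.Prime) (γ δ : ℚ) (hγ : ¬ p ∣ γ.den)
    (hδden : ¬ p ∣ δ.den) (hδ : ∃ a : ℕ, a < p ∧ (p : ℚ) * δ - γ = (a : ℚ))
    (k : ℕ) :
    MulCongMod p ((ascPochhammer ℚ (p * k)).eval γ)
      ((-(p : ℚ)) ^ k * (ascPochhammer ℚ k).eval δ) := by
  obtain ⟨a, ha, haeq⟩ := hδ
  induction k with
  | zero =>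
    right
    refine ⟨by norm_num, 0, pden_of_den_one hp (by norm_num), by norm_num⟩
  | succ k ih =>
    have hxden : ¬ p ∣ (δ + (k : ℚ)).den := pden_add hp hδden (pden_natCast hp k)
    have key := dwork_step hp hxden ha
    have hrw : ∀ j ∈ Finset.range p,
        ((p : ℚ) * (δ + (k : ℚ)) - a + j) = (γ + ((p * k : ℕ) : ℚ) + j) := by
      intro j _
      push_cast
      linear_combination haeq
    rw [Finset.prod_congr rfl hrw] at key
    have hLHS : (ascPochhammer ℚ (p * (k + 1))).eval γ
        = (ascPochhammer ℚ (p * k)).eval γ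
          * ∏ j ∈ Finset.range p, (γ + ((p * k : ℕ) : ℚ) + j) := by
      rw [asc_eval_prod, asc_eval_prod]
      have : p * (k + 1) = p * k + p := by ring
      rw [this, Finset.prod_range_add]
      congr 1
      refine Finset.prod_congr rfl fun j _ => ?_
      push_cast
      ring
    have hRHS : (-(p : ℚ)) ^ (k + 1) * (ascPochhammer ℚ (k + 1)).eval δ
        = ((-(p : ℚ)) ^ k * (ascPochhammer ℚ k).eval δ) * (-(p : ℚ) * (δ + (k : ℚ))) := by
      rw [ascPochhammer_succ_eval]
      ring
    rw [hLHS, hRHS]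
    exact mulcong_mul hp ih key
end

section
/- For γ ∈ ℚ \ ℤ_(p) (i.e., val_p(γ) < 0) and k ≥ 0, (γ)_{pk} is multiplicatively congruent to (−p)^{k(p−1)val_p(γ)} · (γ)_k modulo p. -/
/-- `x` is of the form `a/b` with `a ≡ b [ZMOD p]` and `p ∤ b`, i.e. `x ∈ 1 + pℤ_(p)`. -/
def Good (p : ℕ) (x : ℚ) : Prop :=
  ∃ a b : ℤ, ¬ (p : ℤ) ∣ b ∧ a ≡ b [ZMOD p] ∧ x = a / b

lemma not_dvd_one_int {p : ℕ} (hp : p.Prime) : ¬ (p : ℤ) ∣ (1 : ℤ) := by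
  intro h
  have h1 := Int.le_of_dvd one_pos h
  have h2 := hp.two_le
  omega

lemma Good.one (p : ℕ) (hp : p.Prime) : Good p 1 :=
  ⟨1, 1, not_dvd_one_int hp, Int.ModEq.refl 1, by norm_num⟩

lemma Good.mul {p : ℕ} (hp : p.Prime) {x y : ℚ} (hx : Good p x) (hy : Good p y) :
    Good p (x * y) := by
  obtain ⟨a, b, hb, hab, rfl⟩ := hx
  obtain ⟨c, d, hd, hcd, rfl⟩ := hy
  refine ⟨a * c, b * d, ?_, hab.mul hcd, by push_cast; ring⟩
  intro h
  rcases (Int.Prime.dvd_mul' (by exact_mod_cast hp) h) with h' | h' <;> [exact hb h'; exact hd h']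

lemma Good.num_not_dvd {p : ℕ} {a b : ℤ} (hb : ¬ (p : ℤ) ∣ b) (hab : a ≡ b [ZMOD p]) :
    ¬ (p : ℤ) ∣ a := fun h => hb (by
  have h1 : (p : ℤ) ∣ b - a := hab.dvd
  simpa using dvd_add h1 h)

lemma Good.inv {p : ℕ} {x : ℚ} (hx : Good p x) : Good p x⁻¹ := by
  obtain ⟨a, b, hb, hab, rfl⟩ := hx
  exact ⟨b, a, Good.num_not_dvd hb hab, hab.symm, by rw [inv_div]⟩

lemma Good.div {p : ℕ} (hp : p.Prime) {x y : ℚ} (hx : Good p x) (hy : Good p y) :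
    Good p (x / y) := by
  rw [div_eq_mul_inv]; exact hx.mul hp hy.inv

lemma Good.pow {p : ℕ} (hp : p.Prime) {x : ℚ} (hx : Good p x) (n : ℕ) : Good p (x ^ n) := by
  induction n with
  | zero => simpa using Good.one p hp
  | succ n ih => rw [pow_succ]; exact ih.mul hp hx

lemma Good.ne_zero {p : ℕ} {x : ℚ} (hx : Good p x) : x ≠ 0 := by
  obtain ⟨a, b, hb, hab, rfl⟩ := hx
  have ha : ¬ (p : ℤ) ∣ a := Good.num_not_dvd hb hab
  have ha0 : a ≠ 0 := fun h => ha (h ▸ dvd_zero _)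
  have hb0 : b ≠ 0 := fun h => hb (h ▸ dvd_zero _)
  exact div_ne_zero (by exact_mod_cast ha0) (by exact_mod_cast hb0)

/-- Elements of `Good p` are of the form `1 + p u` with `u` `p`-integral. -/
lemma Good.exists_rep {p : ℕ} {x : ℚ} (hx : Good p x) :
    ∃ u : ℚ, ¬ p ∣ u.den ∧ x = 1 + p * u := by
  obtain ⟨a, b, hb, hab, rfl⟩ := hx
  obtain ⟨c, hc⟩ : (p : ℤ) ∣ a - b := by simpa using hab.symm.dvd
  have hb0 : b ≠ 0 := fun h => hb (h ▸ dvd_zero _)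
  refine ⟨(c : ℚ) / (b : ℚ), ?_, ?_⟩
  · intro hdvd
    have hden : (((c : ℚ) / (b : ℚ)).den : ℤ) ∣ b := by
      rw [← Rat.divInt_eq_div]; exact Rat.den_dvd c b
    exact hb (dvd_trans (by exact_mod_cast hdvd) hden)
  · have hbQ : (b : ℚ) ≠ 0 := by exact_mod_cast hb0
    have ha : a = b + p * c := by linarith [hc]
    rw [ha]
    push_cast
    field_simp
  -- Fermat

/-- Fermat: if `p ∤ a` and `p ∤ b` then `(a/b)^(p-1) ∈ 1 + pℤ_(p)`. -/
lemma good_pow_card_sub_one {p : ℕ} (hp : p.Prime) {a b : ℤ}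
    (ha : ¬ (p : ℤ) ∣ a) (hb : ¬ (p : ℤ) ∣ b) :
    Good p (((a : ℚ) / (b : ℚ)) ^ (p - 1)) := by
  haveI : Fact p.Prime := ⟨hp⟩
  have fermat : ∀ z : ℤ, ¬ (p : ℤ) ∣ z → z ^ (p - 1) ≡ 1 [ZMOD p] := by
    intro z hz
    have hz' : (z : ZMod p) ≠ 0 := by
      simpa [ZMod.intCast_zmod_eq_zero_iff_dvd] using hz
    have h1 := ZMod.pow_card_sub_one_eq_one hz'
    have h2 : ((z ^ (p - 1) : ℤ) : ZMod p) = ((1 : ℤ) : ZMod p) := by push_cast; simpa using h1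
    exact (ZMod.intCast_eq_intCast_iff' _ _ _).mp h2
  have hbp : ¬ (p : ℤ) ∣ b ^ (p - 1) := fun h =>
    hb ((Nat.prime_iff_prime_int.mp hp).dvd_of_dvd_pow h)
  refine ⟨a ^ (p - 1), b ^ (p - 1), hbp, ?_, by rw [div_pow]; push_cast; ring⟩
  exact (fermat a ha).trans (fermat b hb).symm

lemma num_den_facts {p : ℕ} {γ : ℚ} (hp : p.Prime) (hγ : padicValRat p γ < 0) :
    γ ≠ 0 ∧ p ∣ γ.den ∧ ¬ (p : ℤ) ∣ γ.num := by
  have hγ0 : γ ≠ 0 := by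
    rintro rfl; simp [padicValRat] at hγ
  have hpden : p ∣ γ.den := by
    by_contra h
    have h1 : padicValNat p γ.den = 0 := padicValNat.eq_zero_of_not_dvd h
    have h2 : padicValRat p γ = padicValInt p γ.num - padicValNat p γ.den := rfl
    rw [h1] at h2
    simp only [Nat.cast_zero, sub_zero] at h2
    omega
  have hnum : ¬ (p : ℤ) ∣ γ.num := by
    intro h
    have h1 : p ∣ γ.num.natAbs := by
      rw [← Int.natCast_dvd_natCast, Int.dvd_natAbs]; exact h
    exact Nat.Prime.not_dvd_one hp (Nat.dvd_gcd h1 hpden |>.trans γ.reduced.dvd)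
  exact ⟨hγ0, hpden, hnum⟩

/-- Each factor `(γ + i)/γ` lies in `1 + pℤ_(p)`. -/
lemma good_factor {p : ℕ} {γ : ℚ} (hp : p.Prime) (hγ : padicValRat p γ < 0) (i : ℕ) :
    Good p ((γ + i) / γ) := by
  obtain ⟨hγ0, hpden, hnum⟩ := num_den_facts hp hγ
  have hdvd : (p : ℤ) ∣ (i : ℤ) * γ.den := Dvd.dvd.mul_left (by exact_mod_cast hpden) _
  refine ⟨γ.num + i * γ.den, γ.num, hnum, ?_, ?_⟩
  · refine Int.ModEq.symm (Int.modEq_iff_dvd.mpr ?_)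
    have he : (γ.num + (i : ℤ) * γ.den) - γ.num = (i : ℤ) * γ.den := by ring
    rw [he]; exact hdvd
  · have hn : (γ.num : ℚ) ≠ 0 := by exact_mod_cast Rat.num_ne_zero.mpr hγ0
    have hmul : γ * (γ.den : ℚ) = (γ.num : ℚ) := Rat.mul_den_eq_num γ
    push_cast
    rw [div_eq_div_iff hγ0 hn]
    linear_combination (-(i : ℚ)) * hmul

lemma good_asc {p : ℕ} {γ : ℚ} (hp : p.Prime) (hγ : padicValRat p γ < 0) (n : ℕ) :
    Good p ((ascPochhammer ℚ n).eval γ / γ ^ n) := by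
  induction n with
  | zero => simpa [ascPochhammer] using Good.one p hp
  | succ n ih =>
    have heval : (ascPochhammer ℚ (n + 1)).eval γ =
        (ascPochhammer ℚ n).eval γ * (γ + n) := by
      rw [ascPochhammer_succ_right]; simp
    rw [heval, pow_succ, ← div_mul_div_comm]
    exact ih.mul hp (good_factor hp hγ n)

theorem pochhammer_pk_mulcong_of_neg_val
    (p : ℕ) (hp : p.Prime) (γ : ℚ) (hγ : padicValRat p γ < 0) (k : ℕ) :
    MulCongMod p ((ascPochhammer ℚ (p * k)).eval γ)
      ((-(p : ℚ)) ^ ((k : ℤ) * ((p : ℤ) - 1) * padicValRat p γ) *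
        (ascPochhammer ℚ k).eval γ) := by
  obtain ⟨hγ0, hpden, hnum⟩ := num_den_facts hp hγ
  set t : ℕ := padicValNat p γ.den with ht
  set b' : ℕ := γ.den / p ^ t with hb'
  have hden0 : γ.den ≠ 0 := γ.den_nz
  have hfact : p ^ t * b' = γ.den := by
    rw [hb', ht, ← Nat.factorization_def _ hp]
    exact Nat.ordProj_mul_ordCompl_eq_self γ.den p
  have hb'nd : ¬ p ∣ b' := by
    rw [hb', ht, ← Nat.factorization_def _ hp]
    exact Nat.not_dvd_ordCompl hp hden0
  have hb'0 : b' ≠ 0 := fun h => hden0 (by rw [← hfact, h, mul_zero])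
  have hv : padicValRat p γ = -(t : ℤ) := by
    have h2 : padicValRat p γ = padicValInt p γ.num - padicValNat p γ.den := rfl
    rw [h2, padicValInt.eq_zero_of_not_dvd hnum]; simp [ht]
  -- the unit part w = γ * (-p)^t
  set w : ℚ := γ * (-(p : ℚ)) ^ t with hw
  have hpQ : (p : ℚ) ≠ 0 := by exact_mod_cast hp.pos.ne'
  have hb'Q : ((b' : ℚ)) ≠ 0 := by exact_mod_cast hb'0
  have hwEq : w = (((-1) ^ t * γ.num : ℤ) : ℚ) / ((b' : ℤ) : ℚ) := by
    have hmul : γ * (γ.den : ℚ) = (γ.num : ℚ) := Rat.mul_den_eq_num γ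
    have hdenQ : γ * ((p : ℚ) ^ t * (b' : ℚ)) = (γ.num : ℚ) := by
      rw [show ((p : ℚ) ^ t * (b' : ℚ)) = ((γ.den : ℕ) : ℚ) by rw [← hfact]; push_cast; ring]
      exact hmul
    rw [hw, eq_div_iff (by exact_mod_cast hb'0)]
    push_cast
    rw [neg_pow]
    linear_combination ((-1 : ℚ) ^ t) * hdenQ
  have hwnum : ¬ (p : ℤ) ∣ (-1) ^ t * γ.num := by
    intro h
    rcases Int.Prime.dvd_mul' (by exact_mod_cast hp) h with h' | h'
    · rcases Nat.even_or_odd t with he | he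
      · rw [he.neg_one_pow] at h'
        exact not_dvd_one_int hp h'
      · rw [he.neg_one_pow] at h'
        exact not_dvd_one_int hp (dvd_neg.mp h')
    · exact hnum h'
  have hwden : ¬ (p : ℤ) ∣ (b' : ℤ) := fun h => hb'nd (by exact_mod_cast h)
  have hwgood : Good p (w ^ (p - 1)) := by
    rw [hwEq]; exact good_pow_card_sub_one hp hwnum hwden
  set A : ℚ := (ascPochhammer ℚ (p * k)).eval γ with hA
  set B : ℚ := (ascPochhammer ℚ k).eval γ with hB
  have hgoodA : Good p (A / γ ^ (p * k)) := good_asc hp hγ (p * k)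
  have hgoodB : Good p (B / γ ^ k) := good_asc hp hγ k
  have hB0 : B ≠ 0 := by
    intro h
    exact hgoodB.ne_zero (by rw [h, zero_div])
  have hN : ((k : ℤ) * ((p : ℤ) - 1) * padicValRat p γ) = -((k * (p - 1) * t : ℕ) : ℤ) := by
    rw [hv]
    push_cast [Nat.cast_sub hp.one_le]
    ring
  set N : ℕ := k * (p - 1) * t with hNdef
  have hnegp : (-(p : ℚ)) ≠ 0 := by simpa using hpQ
  have hzpow : (-(p : ℚ)) ^ ((k : ℤ) * ((p : ℤ) - 1) * padicValRat p γ) =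
      ((-(p : ℚ)) ^ N)⁻¹ := by
    rw [hN, zpow_neg, zpow_natCast]
  have hRHS0 : (-(p : ℚ)) ^ ((k : ℤ) * ((p : ℤ) - 1) * padicValRat p γ) * B ≠ 0 :=
    mul_ne_zero (zpow_ne_zero _ hnegp) hB0
  refine Or.inr ⟨hRHS0, ?_⟩
  have hwpow : (w ^ (p - 1)) ^ k = γ ^ ((p - 1) * k) * (-(p : ℚ)) ^ N := by
    rw [hw, ← pow_mul, mul_pow, ← pow_mul]
    congr 2
    rw [hNdef]; ring
  have hγpow : γ ^ (p * k) = γ ^ ((p - 1) * k) * γ ^ k := by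
    rw [← pow_add]
    congr 1
    have hkle : k ≤ p * k := Nat.le_mul_of_pos_left k hp.pos
    rw [Nat.sub_one_mul, Nat.sub_add_cancel hkle]
  have hQ : A / ((-(p : ℚ)) ^ ((k : ℤ) * ((p : ℤ) - 1) * padicValRat p γ) * B) =
      (A / γ ^ (p * k)) * (w ^ (p - 1)) ^ k / (B / γ ^ k) := by
    rw [hzpow, hwpow, hγpow]
    have h1 : γ ^ ((p - 1) * k) ≠ 0 := pow_ne_zero _ hγ0
    have h2 : γ ^ k ≠ 0 := pow_ne_zero _ hγ0
    have h3 : (-(p : ℚ)) ^ N ≠ 0 := pow_ne_zero _ hnegp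
    field_simp
  rw [hQ]
  exact Good.exists_rep ((hgoodA.mul hp (hwgood.pow hp k)).div hp hgoodB)
end
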